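/- Let M be a positive semidefinite operator with spectral decomposition M = Σᵢ pᵢ|vᵢ⟩⟨vᵢ| and let ρ, σ be density operators. Suppose B is a set of indices and Π = Σ_{i∈B} |vᵢ⟩⟨vᵢ|, and for all i ∉ B one has ⟨vᵢ|ρ|vᵢ⟩ ≤ C·⟨vᵢ|σ|vᵢ⟩ for some C ≥ 0. Then Tr(M(I−Π)ρ(I−Π)) ≤ C·Tr(Mσ). -/

import Mathlib

open Matrix ComplexOrder

variable {n : Type*} [Fintype n] [DecidableEq n]

/-- The old Mathlib `Matrix.PosSemidef.sqrt` (removed upstream), spelled out. -/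
noncomputable def posSemidefSqrt {A : Matrix n n ℂ} (hA : A.PosSemidef) : Matrix n n ℂ :=
  (hA.1.eigenvectorUnitary : Matrix n n ℂ) *
    diagonal (fun i => ((Real.sqrt (hA.1.eigenvalues i) : ℝ) : ℂ)) *
    (star hA.1.eigenvectorUnitary : Matrix n n ℂ)

/-- The trace norm `‖M‖₁ = Tr √(Mᴴ M)` of a matrix. -/
noncomputable def traceNorm (M : Matrix n n ℂ) : ℝ :=
  ((posSemidefSqrt (Matrix.posSemidef_conjTranspose_mul_self M)).trace).re

/-- Positive semidefinite square root (junk value `0` off the PSD matrices). -/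
noncomputable def msqrt (A : Matrix n n ℂ) : Matrix n n ℂ :=
  @dite _ A.PosSemidef (Classical.propDecidable _) (fun h => posSemidefSqrt h) (fun _ => 0)

/-- Fidelity `F(ρ,σ) = ‖√ρ √σ‖₁²`. -/
noncomputable def fidelity (ρ σ : Matrix n n ℂ) : ℝ :=
  (traceNorm (msqrt ρ * msqrt σ)) ^ 2

/-- A density operator: positive semidefinite with unit trace. -/
def IsDensity (ρ : Matrix n n ℂ) : Prop := ρ.PosSemidef ∧ ρ.trace = 1

/-- The Löwner partial order `A ⪯ B`. -/
def Loewner (A B : Matrix n n ℂ) : Prop := (B - A).PosSemidef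

/-- `supp ρ ⊆ supp σ`, expressed for PSD matrices as `ker σ ⊆ ker ρ`. -/
def SuppSubset (ρ σ : Matrix n n ℂ) : Prop := ∀ v, σ *ᵥ v = 0 → ρ *ᵥ v = 0

/-- Observational divergence `D(ρ‖σ)`. -/
noncomputable def obsDiv (ρ σ : Matrix n n ℂ) : ℝ :=
  sSup { x | ∃ M : Matrix n n ℂ, M.PosSemidef ∧ (1 - M).PosSemidef ∧
    (M * σ).trace ≠ 0 ∧
    x = ((M * ρ).trace).re * Real.logb 2 (((M * ρ).trace).re / ((M * σ).trace).re) }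

lemma aux_vmv_mulVec (w x y : n → ℂ) : vecMulVec w x *ᵥ y = (x ⬝ᵥ y) • w := by
  ext i
  simp only [vecMulVec, mulVec, dotProduct, Pi.smul_apply, smul_eq_mul, Matrix.of_apply,
    Finset.sum_mul]
  exact Finset.sum_congr rfl fun j _ => by ring

lemma aux_vecMul_vmv (x w y : n → ℂ) : x ᵥ* vecMulVec w y = (x ⬝ᵥ w) • y := by
  ext j
  simp only [vecMulVec, vecMul, dotProduct, Pi.smul_apply, smul_eq_mul, Matrix.of_apply,
    Finset.sum_mul]
  exact Finset.sum_congr rfl fun i _ => by ring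

lemma aux_trace_vmv_mul (u w : n → ℂ) (A : Matrix n n ℂ) :
    (vecMulVec u w * A).trace = w ⬝ᵥ A *ᵥ u := by
  simp [trace, Matrix.mul_apply, vecMulVec, mulVec, dotProduct, Finset.mul_sum]
  rw [Finset.sum_comm]
  exact Finset.sum_congr rfl fun j _ => Finset.sum_congr rfl fun i _ => by ring

lemma aux_sum_mulVec {m : Type*} (s : Finset m) (A : m → Matrix n n ℂ) (x : n → ℂ) :
    (∑ i ∈ s, A i) *ᵥ x = ∑ i ∈ s, A i *ᵥ x := by
  ext j
  simp only [mulVec, dotProduct, Finset.sum_apply, Matrix.sum_apply, Finset.sum_mul]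
  rw [Finset.sum_comm]

lemma aux_vecMul_sum {m : Type*} (s : Finset m) (A : m → Matrix n n ℂ) (x : n → ℂ) :
    x ᵥ* (∑ i ∈ s, A i) = ∑ i ∈ s, x ᵥ* A i := by
  ext j
  simp only [vecMul, dotProduct, Finset.sum_apply, Matrix.sum_apply, Finset.mul_sum]
  rw [Finset.sum_comm]

theorem stmt16 (ρ σ : Matrix n n ℂ) (hρ : IsDensity ρ) (hσ : IsDensity σ)
    (p : n → ℝ) (hp : ∀ i, 0 ≤ p i) (v : n → n → ℂ)
    (horth : ∀ i j, star (v i) ⬝ᵥ v j = if i = j then 1 else 0)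
    (M : Matrix n n ℂ) (hM : M = ∑ i, ((p i : ℂ)) • vecMulVec (v i) (star (v i)))
    (B : Finset n) (P : Matrix n n ℂ)
    (hP : P = ∑ i ∈ B, vecMulVec (v i) (star (v i)))
    (C : ℝ) (hC : 0 ≤ C)
    (hB : ∀ i ∉ B, (star (v i) ⬝ᵥ ρ *ᵥ (v i)).re ≤ C * (star (v i) ⬝ᵥ σ *ᵥ (v i)).re) :
    ((M * ((1 - P) * ρ * (1 - P))).trace).re ≤ C * ((M * σ).trace).re := by
  have key : ∀ X : Matrix n n ℂ,
      (M * X).trace = ∑ i, (p i : ℂ) * (star (v i) ⬝ᵥ X *ᵥ v i) := by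
    intro X
    rw [hM, Finset.sum_mul]
    simp [Matrix.smul_mul, aux_trace_vmv_mul]
  have hPv : ∀ i, P *ᵥ v i = if i ∈ B then v i else 0 := by
    intro i
    rw [hP, aux_sum_mulVec]
    simp only [aux_vmv_mulVec, horth]
    rw [Finset.sum_congr rfl (fun j _ => by rw [ite_smul, one_smul, zero_smul])]
    simp [Finset.sum_ite_eq]
  have hvP : ∀ i ∉ B, star (v i) ᵥ* P = 0 := by
    intro i hi
    rw [hP, aux_vecMul_sum]
    refine Finset.sum_eq_zero fun j hj => ?_
    rw [aux_vecMul_vmv, horth, if_neg (fun h : i = j => hi (h ▸ hj)), zero_smul]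
  have hq : ∀ i, star (v i) ⬝ᵥ ((1 - P) * ρ * (1 - P)) *ᵥ v i =
      if i ∈ B then 0 else star (v i) ⬝ᵥ ρ *ᵥ v i := by
    intro i
    have h1 : (1 - P) *ᵥ v i = if i ∈ B then 0 else v i := by
      rw [Matrix.sub_mulVec, Matrix.one_mulVec, hPv]
      by_cases hi : i ∈ B <;> simp [hi]
    rw [← Matrix.mulVec_mulVec, ← Matrix.mulVec_mulVec, h1]
    by_cases hi : i ∈ B
    · simp [hi]
    · simp only [hi, if_false]
      rw [Matrix.sub_mulVec, Matrix.one_mulVec, dotProduct_sub]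
      have h2 : star (v i) ⬝ᵥ P *ᵥ ρ *ᵥ v i = 0 := by
        rw [Matrix.dotProduct_mulVec, hvP i hi, zero_dotProduct]
      rw [h2, sub_zero]
  rw [key, key]
  simp only [hq, Complex.re_sum, Complex.re_ofReal_mul]
  rw [Finset.mul_sum]
  refine Finset.sum_le_sum fun i _ => ?_
  have hσi : 0 ≤ (star (v i) ⬝ᵥ σ *ᵥ v i).re := hσ.1.re_dotProduct_nonneg (v i)
  by_cases hi : i ∈ B
  · simp only [hi, if_true, Complex.zero_re, mul_zero]
    exact mul_nonneg hC (mul_nonneg (hp i) hσi)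
  · simp only [hi, if_false]
    calc p i * (star (v i) ⬝ᵥ ρ *ᵥ v i).re
        ≤ p i * (C * (star (v i) ⬝ᵥ σ *ᵥ v i).re) :=
          mul_le_mul_of_nonneg_left (hB i hi) (hp i)
      _ = C * (p i * (star (v i) ⬝ᵥ σ *ᵥ v i).re) := by ring
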